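/- arXiv:1007.0484 — 2 statements merged into one kernel-verified Lean document; each statement's English description precedes it below -/
import Mathlib

section
/- Covering the surface of a D-dimensional hypersphere of radius R by spherical caps of half-angle φ ∈ (0, π/2) requires at least (1/sin φ)^(D−2) caps, for D ≥ 3. -/
/-!
Rescaling radially, caps of half-angle `φ` covering the sphere of radius `R` give solid sectors
(cones over the caps) covering the ball, so it suffices that each sector has at most
`sin φ ^ (D - 2)` times the volume of the ball. Slicing perpendicular to the axis `u`, a sector
lies in a cone of height `R cos φ` and base radius `R sin φ` together with a cap of the ball.
Translated by `R cos φ`, that cap fits under a half-ball of radius `R sin φ`, of volume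
`sin φ ^ D` times a half-ball of radius `R`; the cone has at most `sin φ ^ (D - 2)` times the
volume of the cone of height and radius `R`, which is inscribed in a half-ball of radius `R`.
-/

open MeasureTheory Metric Real Set Module
open scoped RealInnerProductSpace

section SolidOfRevolution

variable {W : Type*} [NormedAddCommGroup W] [NormedSpace ℝ W] [FiniteDimensional ℝ W]
  [MeasureSpace W] [BorelSpace W] [(volume : Measure W).IsAddHaarMeasure]

def solidOfRevolution (a b : ℝ) (g : ℝ → ℝ) : Set (ℝ × W) :=
  {p | p.1 ∈ Icc a b ∧ ‖p.2‖ ≤ g p.1}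

lemma volume_solidOfRevolution {a b : ℝ} {g : ℝ → ℝ} (hab : a ≤ b) (hg : Continuous g)
    (hg0 : ∀ t ∈ Icc a b, 0 ≤ g t) :
    volume (solidOfRevolution a b g : Set (ℝ × W)) =
      ENNReal.ofReal (∫ t in a..b, g t ^ finrank ℝ W) * volume (ball (0 : W) 1) := by
  have hmeas : MeasurableSet (solidOfRevolution a b g : Set (ℝ × W)) :=
    ((isClosed_Icc.preimage continuous_fst).inter
      (isClosed_le continuous_snd.norm (hg.comp continuous_fst))).measurableSet
  have hslice : ∀ t, volume (Prod.mk t ⁻¹' (solidOfRevolution a b g : Set (ℝ × W))) =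
      (Icc a b).indicator
        (fun t ↦ ENNReal.ofReal (g t ^ finrank ℝ W) * volume (ball (0 : W) 1)) t := by
    intro t
    by_cases ht : t ∈ Icc a b
    · have : Prod.mk t ⁻¹' (solidOfRevolution a b g : Set (ℝ × W)) = closedBall 0 (g t) := by
        ext y; simp [solidOfRevolution, ht.1, ht.2]
      rw [indicator_of_mem ht, this, Measure.addHaar_closedBall _ _ (hg0 t ht)]
    · have : Prod.mk t ⁻¹' (solidOfRevolution a b g : Set (ℝ × W)) = ∅ := by
        ext y; exact iff_of_false (fun h ↦ ht h.1) id
      rw [indicator_of_notMem ht, this, measure_empty]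
  have hint : IntegrableOn (fun t ↦ g t ^ finrank ℝ W) (Icc a b) :=
    (hg.pow _).continuousOn.integrableOn_compact isCompact_Icc
  rw [Measure.volume_eq_prod, Measure.prod_apply hmeas, lintegral_congr hslice,
    lintegral_indicator measurableSet_Icc, lintegral_mul_const' _ _ measure_ball_lt_top.ne,
    ← ofReal_integral_eq_lintegral_ofReal hint
      ((ae_restrict_iff' measurableSet_Icc).2 (ae_of_all _ fun t ht ↦ pow_nonneg (hg0 t ht) _)),
    intervalIntegral.integral_of_le hab, integral_Icc_eq_integral_Ioc]

end SolidOfRevolution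

section Integrals

variable (n : ℕ) {R : ℝ}

lemma integral_sqrt_sq_sub_sq_pow_mul_radius {s : ℝ} (hs : 0 < s) :
    ∫ t in 0..s * R, √((s * R) ^ 2 - t ^ 2) ^ n =
      s ^ (n + 1) * ∫ t in 0..R, √(R ^ 2 - t ^ 2) ^ n := by
  have hpt : ∀ t, √((s * R) ^ 2 - (s * t) ^ 2) ^ n = s ^ n * √(R ^ 2 - t ^ 2) ^ n := by
    intro t
    rw [← mul_pow, show (s * R) ^ 2 - (s * t) ^ 2 = s ^ 2 * (R ^ 2 - t ^ 2) by ring,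
      sqrt_mul (by positivity), sqrt_sq hs.le]
  have := intervalIntegral.integral_comp_mul_left (fun t ↦ √((s * R) ^ 2 - t ^ 2) ^ n) hs.ne'
    (a := 0) (b := R)
  simp only [hpt, intervalIntegral.integral_const_mul, mul_zero, smul_eq_mul] at this
  rw [eq_inv_mul_iff_mul_eq₀ hs.ne'] at this
  rw [← this]
  ring

lemma pow_succ_div_le_integral_sqrt_sq_sub_sq_pow (hR : 0 ≤ R) :
    R ^ (n + 1) / (n + 1) ≤ ∫ t in 0..R, √(R ^ 2 - t ^ 2) ^ n := by
  have hcone : ∫ t in 0..R, (R - t) ^ n = R ^ (n + 1) / (n + 1) := by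
    simp [intervalIntegral.integral_comp_sub_left (fun x ↦ x ^ n) R, integral_pow]
  rw [← hcone]
  refine intervalIntegral.integral_mono_on hR (Continuous.intervalIntegrable (by fun_prop) _ _)
    (Continuous.intervalIntegrable (by fun_prop) _ _) fun t ht ↦ ?_
  gcongr
  · linarith [ht.2]
  · exact le_sqrt_of_sq_le (by nlinarith [ht.1, ht.2])

lemma integral_neg_sqrt_sq_sub_sq_pow_eq_two_mul :
    ∫ t in -R..R, √(R ^ 2 - t ^ 2) ^ n = 2 * ∫ t in 0..R, √(R ^ 2 - t ^ 2) ^ n := by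
  have hneg : ∫ t in -R..0, √(R ^ 2 - t ^ 2) ^ n = ∫ t in 0..R, √(R ^ 2 - t ^ 2) ^ n := by
    have h := intervalIntegral.integral_comp_neg (fun t ↦ √(R ^ 2 - t ^ 2) ^ n) (a := 0) (b := R)
    simp only [neg_sq, neg_zero] at h
    exact h.symm
  rw [← intervalIntegral.integral_add_adjacent_intervals (b := 0)
    (Continuous.intervalIntegrable (by fun_prop) _ _)
    (Continuous.intervalIntegrable (by fun_prop) _ _), hneg, two_mul]

lemma integral_sqrt_sq_sub_sq_pow_cap_le (hR : 0 ≤ R) {φ : ℝ} (hφ0 : 0 < φ) (hφ : φ ≤ π / 2) :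
    ∫ t in R * cos φ..R, √(R ^ 2 - t ^ 2) ^ n ≤
      sin φ ^ (n + 1) * ∫ t in 0..R, √(R ^ 2 - t ^ 2) ^ n := by
  have hs : 0 < sin φ := sin_pos_of_pos_of_lt_pi hφ0 (by linarith [pi_pos])
  have hc : 0 ≤ cos φ := cos_nonneg_of_mem_Icc ⟨by linarith [pi_pos], hφ⟩
  have hsc := sin_sq_add_cos_sq φ
  have hRc : R * cos φ ≤ R := mul_le_of_le_one_right hR (cos_le_one φ)
  have hbase : R - R * cos φ ≤ sin φ * R := by nlinarith [mul_nonneg hR hc]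
  -- Translated by `R cos φ`, the cap lies under the half-ball of radius `R sin φ`.
  calc ∫ t in R * cos φ..R, √(R ^ 2 - t ^ 2) ^ n
      ≤ ∫ t in R * cos φ..R, √((sin φ * R) ^ 2 - (t - R * cos φ) ^ 2) ^ n := by
        refine intervalIntegral.integral_mono_on hRc
          (Continuous.intervalIntegrable (by fun_prop) _ _)
          (Continuous.intervalIntegrable (by fun_prop) _ _) fun t ht ↦
          pow_le_pow_left₀ (sqrt_nonneg _) (sqrt_le_sqrt ?_) n
        nlinarith [ht.1, mul_nonneg hR hc]
    _ = ∫ t in 0..R - R * cos φ, √((sin φ * R) ^ 2 - t ^ 2) ^ n := by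
        simp [intervalIntegral.integral_comp_sub_right (fun t ↦ √((sin φ * R) ^ 2 - t ^ 2) ^ n)]
    _ ≤ ∫ t in 0..sin φ * R, √((sin φ * R) ^ 2 - t ^ 2) ^ n :=
        intervalIntegral.integral_mono_interval le_rfl (by linarith) hbase
          (ae_of_all _ fun t ↦ by positivity) (Continuous.intervalIntegrable (by fun_prop) _ _)
    _ = sin φ ^ (n + 1) * ∫ t in 0..R, √(R ^ 2 - t ^ 2) ^ n :=
        integral_sqrt_sq_sub_sq_pow_mul_radius n hs

lemma integral_mul_tan_pow {φ : ℝ} (hc : cos φ ≠ 0) :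
    ∫ t in 0..R * cos φ, (t * tan φ) ^ n = sin φ ^ n * cos φ * (R ^ (n + 1) / (n + 1)) := by
  simp_rw [mul_pow]
  rw [intervalIntegral.integral_mul_const, integral_pow, tan_eq_sin_div_cos, div_pow]
  field_simp
  ring

lemma integral_cone_add_cap_le (hn : 1 ≤ n) (hR : 0 ≤ R) {φ : ℝ} (hφ0 : 0 < φ)
    (hφ : φ < π / 2) :
    (∫ t in 0..R * cos φ, (t * tan φ) ^ n) + ∫ t in R * cos φ..R, √(R ^ 2 - t ^ 2) ^ n ≤
      sin φ ^ (n - 1) * ∫ t in -R..R, √(R ^ 2 - t ^ 2) ^ n := by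
  obtain ⟨m, rfl⟩ : ∃ m, n = m + 1 := ⟨n - 1, by omega⟩
  have hs : 0 < sin φ := sin_pos_of_pos_of_lt_pi hφ0 (by linarith [pi_pos])
  have hc : 0 < cos φ := cos_pos_of_mem_Ioo ⟨by linarith [pi_pos], hφ⟩
  have hK := pow_succ_div_le_integral_sqrt_sq_sub_sq_pow (m + 1) hR
  have hcap := integral_sqrt_sq_sub_sq_pow_cap_le (m + 1) hR hφ0 hφ.le
  set K := ∫ t in 0..R, √(R ^ 2 - t ^ 2) ^ (m + 1)
  have hK0 : 0 ≤ K := le_trans (by positivity) hK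
  have hcone :
      sin φ ^ (m + 1) * cos φ * (R ^ (m + 1 + 1) / (↑(m + 1) + 1)) ≤ sin φ ^ m * K := by
    calc _ = sin φ ^ m * ((sin φ * cos φ) * (R ^ (m + 1 + 1) / (↑(m + 1) + 1))) := by ring
      _ ≤ sin φ ^ m * K := by
        have hsc : sin φ * cos φ ≤ 1 := by nlinarith [sin_sq_add_cos_sq φ]
        gcongr
        exact (mul_le_of_le_one_left (by positivity) hsc).trans hK
  have hcap' : sin φ ^ (m + 1 + 1) * K ≤ sin φ ^ m * K := by
    calc _ = sin φ ^ m * (sin φ ^ 2 * K) := by ring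
      _ ≤ sin φ ^ m * K := by
        gcongr
        exact mul_le_of_le_one_left hK0 (by nlinarith [sin_sq_add_cos_sq φ])
  rw [integral_mul_tan_pow _ hc.ne', integral_neg_sqrt_sq_sub_sq_pow_eq_two_mul,
    Nat.add_sub_cancel]
  linarith

end Integrals

section AxialSplitting

variable {V : Type*} [NormedAddCommGroup V] [InnerProductSpace ℝ V]

lemma toSpanUnitSingleton_inner_eq_orthogonalProjectionOnto {u : V} (hu : ‖u‖ = 1) (x : V) :
    LinearIsometryEquiv.toSpanUnitSingleton u hu ⟪x, u⟫ = (ℝ ∙ u).orthogonalProjectionOnto x := by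
  ext; simp [Submodule.starProjection_unit_singleton ℝ hu, real_inner_comm]

variable [FiniteDimensional ℝ V] [MeasurableSpace V] [BorelSpace V] {u : V} (hu : ‖u‖ = 1)

noncomputable def axialEquiv : V ≃ᵐ ℝ × (ℝ ∙ u)ᗮ :=
  (ℝ ∙ u).orthogonalDecomposition.toHomeomorph.toMeasurableEquiv.trans <|
    (MeasurableEquiv.toLp 2 _).symm.trans <|
      MeasurableEquiv.prodCongr
        (LinearIsometryEquiv.toSpanUnitSingleton u hu).symm.toHomeomorph.toMeasurableEquiv
        (MeasurableEquiv.refl _)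

lemma measurePreserving_axialEquiv : MeasurePreserving (axialEquiv hu) :=
  (ℝ ∙ u).orthogonalDecomposition.measurePreserving.trans <|
    (WithLp.volume_preserving_ofLp _ _).trans <|
      ((LinearIsometryEquiv.toSpanUnitSingleton u hu).symm.measurePreserving.prod
        (MeasurePreserving.id (volume : Measure (ℝ ∙ u)ᗮ)) :)

lemma axialEquiv_apply (x : V) :
    axialEquiv hu x = (⟪x, u⟫, (ℝ ∙ u)ᗮ.orthogonalProjectionOnto x) := by
  change ((LinearIsometryEquiv.toSpanUnitSingleton u hu).symm
    ((ℝ ∙ u).orthogonalDecomposition x).fst, ((ℝ ∙ u).orthogonalDecomposition x).snd) = _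
  rw [Submodule.fst_orthogonalDecomposition_apply, Submodule.snd_orthogonalDecomposition_apply,
    ← toSpanUnitSingleton_inner_eq_orthogonalProjectionOnto hu,
    LinearIsometryEquiv.symm_apply_apply]

lemma norm_sq_eq_axialEquiv (x : V) :
    ‖x‖ ^ 2 = (axialEquiv hu x).1 ^ 2 + ‖(axialEquiv hu x).2‖ ^ 2 := by
  rw [(ℝ ∙ u).norm_sq_eq_add_norm_sq_projection x,
    ← toSpanUnitSingleton_inner_eq_orthogonalProjectionOnto hu, LinearIsometryEquiv.norm_map,
    axialEquiv_apply, Real.norm_eq_abs, sq_abs]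

lemma closedBall_eq_preimage_axialEquiv (R : ℝ) :
    closedBall (0 : V) R =
      axialEquiv hu ⁻¹' solidOfRevolution (-R) R (fun t ↦ √(R ^ 2 - t ^ 2)) := by
  ext x
  have hx := norm_sq_eq_axialEquiv hu x
  rw [mem_preimage]
  generalize axialEquiv hu x = p at hx ⊢
  obtain ⟨t, y⟩ := p
  dsimp only at hx
  rw [mem_closedBall, dist_zero_right]
  change ‖x‖ ≤ R ↔ (-R ≤ t ∧ t ≤ R) ∧ ‖y‖ ≤ √(R ^ 2 - t ^ 2)
  constructor
  · intro h
    have hx2 := mul_self_le_mul_self (norm_nonneg x) h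
    refine ⟨abs_le_of_sq_le_sq' (by nlinarith) ((norm_nonneg x).trans h), ?_⟩
    exact le_sqrt_of_sq_le (by nlinarith)
  · rintro ⟨⟨h1, h2⟩, hy⟩
    have hy2 := (sq_le_sq₀ (norm_nonneg y) (sqrt_nonneg _)).2 hy
    rw [sq_sqrt (by nlinarith)] at hy2
    nlinarith [norm_nonneg x]

end AxialSplitting

section Sector

variable {V : Type*} [NormedAddCommGroup V] [InnerProductSpace ℝ V]

def solidSector (u : V) (R φ : ℝ) : Set V :=
  {x | ‖x‖ ≤ R ∧ ‖x‖ * cos φ ≤ ⟪x, u⟫}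

lemma closedBall_subset_biUnion_solidSector [Nontrivial V] {R φ : ℝ} (hR : 0 < R) {U : Finset V}
    (hcover : ∀ x : V, ‖x‖ = R → ∃ u ∈ U, R * cos φ ≤ ⟪x, u⟫) :
    closedBall (0 : V) R ⊆ ⋃ u ∈ U, solidSector u R φ := by
  intro x hx
  rw [mem_closedBall, dist_zero_right] at hx
  rcases eq_or_ne x 0 with rfl | hx0
  · obtain ⟨x₀, hx₀⟩ := exists_norm_eq V hR.le
    obtain ⟨u, hu, -⟩ := hcover x₀ hx₀
    exact mem_biUnion hu ⟨hx, by simp⟩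
  · have hxpos : 0 < ‖x‖ := norm_pos_iff.2 hx0
    obtain ⟨u, hu, hle⟩ := hcover ((R / ‖x‖) • x) (by
      rw [norm_smul, norm_div, norm_norm, Real.norm_of_nonneg hR.le, div_mul_cancel₀ _ hxpos.ne'])
    rw [real_inner_smul_left, div_mul_eq_mul_div, le_div_iff₀ hxpos] at hle
    exact mem_biUnion hu ⟨hx, le_of_mul_le_mul_left (by linarith) hR⟩

variable [FiniteDimensional ℝ V] [MeasurableSpace V] [BorelSpace V] {u : V} {R φ : ℝ}

lemma solidSector_subset_preimage_axialEquiv (hu : ‖u‖ = 1) (hφ0 : 0 < φ) (hφ : φ < π / 2) :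
    solidSector u R φ ⊆ axialEquiv hu ⁻¹'
      (solidOfRevolution 0 (R * cos φ) (· * tan φ) ∪
        solidOfRevolution (R * cos φ) R (fun t ↦ √(R ^ 2 - t ^ 2))) := by
  rintro x ⟨hxR, hxc⟩
  have hx := norm_sq_eq_axialEquiv hu x
  rw [← show (axialEquiv hu x).1 = ⟪x, u⟫ by rw [axialEquiv_apply]] at hxc
  rw [mem_preimage]
  generalize axialEquiv hu x = p at hx hxc ⊢
  obtain ⟨t, y⟩ := p
  dsimp only at hx hxc
  have hs : 0 < sin φ := sin_pos_of_pos_of_lt_pi hφ0 (by linarith [pi_pos])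
  have hc : 0 < cos φ := cos_pos_of_mem_Ioo ⟨by linarith [pi_pos], hφ⟩
  have hsc := sin_sq_add_cos_sq φ
  have ht0 : 0 ≤ t := (mul_nonneg (norm_nonneg x) hc.le).trans hxc
  have hyc : ‖y‖ * cos φ ≤ t * sin φ := by
    have h1 : (‖x‖ * cos φ) ^ 2 ≤ t ^ 2 := pow_le_pow_left₀ (by positivity) hxc 2
    refine (sq_le_sq₀ (by positivity) (by positivity)).1 ?_
    nlinarith [congrArg (· * cos φ ^ 2) hx, congrArg (· * t ^ 2) hsc]
  by_cases htc : t ≤ R * cos φ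
  · refine Or.inl ⟨⟨ht0, htc⟩, ?_⟩
    change ‖y‖ ≤ t * tan φ
    rw [tan_eq_sin_div_cos, ← mul_div_assoc, le_div_iff₀ hc]
    exact hyc
  · refine Or.inr ⟨⟨le_of_not_ge htc, (?_ : t ≤ R)⟩, (?_ : ‖y‖ ≤ √(R ^ 2 - t ^ 2))⟩
    · nlinarith [mul_self_le_mul_self (norm_nonneg x) hxR, norm_nonneg x]
    · exact le_sqrt_of_sq_le (by nlinarith [norm_nonneg x])

lemma volume_solidSector_le (hu : ‖u‖ = 1) (hV : 2 ≤ finrank ℝ V) (hR : 0 ≤ R) (hφ0 : 0 < φ)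
    (hφ : φ < π / 2) :
    volume (solidSector u R φ) ≤
      ENNReal.ofReal (sin φ ^ (finrank ℝ V - 2)) * volume (closedBall (0 : V) R) := by
  set n := finrank ℝ (ℝ ∙ u)ᗮ
  have hn : finrank ℝ V = n + 1 := by
    rw [← (ℝ ∙ u).finrank_add_finrank_orthogonal,
      finrank_span_singleton (norm_ne_zero_iff.1 (by simp [hu])), add_comm]
  have hs : 0 < sin φ := sin_pos_of_pos_of_lt_pi hφ0 (by linarith [pi_pos])
  have hc : 0 < cos φ := cos_pos_of_mem_Ioo ⟨by linarith [pi_pos], hφ⟩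
  have htan : 0 < tan φ := tan_pos_of_pos_of_lt_pi_div_two hφ0 hφ
  have hRc : 0 ≤ R * cos φ := mul_nonneg hR hc.le
  have hmp := measurePreserving_axialEquiv hu
  calc volume (solidSector u R φ)
      ≤ volume (solidOfRevolution 0 (R * cos φ) (· * tan φ) ∪
          solidOfRevolution (R * cos φ) R (fun t ↦ √(R ^ 2 - t ^ 2)) : Set (ℝ × (ℝ ∙ u)ᗮ)) := by
        rw [← hmp.measure_preimage_equiv]
        exact measure_mono (solidSector_subset_preimage_axialEquiv hu hφ0 hφ)
    _ ≤ ENNReal.ofReal ((∫ t in 0..R * cos φ, (t * tan φ) ^ n) +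
          ∫ t in R * cos φ..R, √(R ^ 2 - t ^ 2) ^ n) * volume (ball (0 : (ℝ ∙ u)ᗮ) 1) := by
        refine (measure_union_le _ _).trans_eq ?_
        rw [volume_solidOfRevolution hRc (by fun_prop) fun t ht ↦ mul_nonneg ht.1 htan.le,
          volume_solidOfRevolution (mul_le_of_le_one_right hR (cos_le_one φ)) (by fun_prop)
            fun t _ ↦ sqrt_nonneg _, ← add_mul, ENNReal.ofReal_add]
        · exact intervalIntegral.integral_nonneg hRc
            fun t ht ↦ pow_nonneg (mul_nonneg ht.1 htan.le) _
        · exact intervalIntegral.integral_nonneg (mul_le_of_le_one_right hR (cos_le_one φ))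
            fun t _ ↦ pow_nonneg (sqrt_nonneg _) _
    _ ≤ ENNReal.ofReal (sin φ ^ (n - 1) * ∫ t in -R..R, √(R ^ 2 - t ^ 2) ^ n) *
          volume (ball (0 : (ℝ ∙ u)ᗮ) 1) := by
        gcongr
        exact integral_cone_add_cap_le n (by omega) hR hφ0 hφ
    _ = ENNReal.ofReal (sin φ ^ (finrank ℝ V - 2)) * volume (closedBall (0 : V) R) := by
        rw [closedBall_eq_preimage_axialEquiv hu, hmp.measure_preimage_equiv,
          volume_solidOfRevolution (by linarith) (by fun_prop) fun t _ ↦ sqrt_nonneg _,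
          ENNReal.ofReal_mul (by positivity), mul_assoc, hn]
        rfl

end Sector

theorem one_le_card_mul_sin_pow_of_caps_cover_sphere {V : Type*} [NormedAddCommGroup V]
    [InnerProductSpace ℝ V] [FiniteDimensional ℝ V] [MeasurableSpace V] [BorelSpace V]
    (hV : 2 ≤ finrank ℝ V) {R φ : ℝ} (hR : 0 < R) (hφ0 : 0 < φ) (hφ : φ < π / 2)
    {U : Finset V} (hU : ∀ u ∈ U, ‖u‖ = 1)
    (hcover : ∀ x : V, ‖x‖ = R → ∃ u ∈ U, R * cos φ ≤ ⟪x, u⟫) :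
    1 ≤ U.card * sin φ ^ (finrank ℝ V - 2) := by
  have : Nontrivial V := Module.nontrivial_of_finrank_pos (R := ℝ) (by omega)
  have hs : 0 ≤ sin φ ^ (finrank ℝ V - 2) :=
    pow_nonneg (sin_nonneg_of_nonneg_of_le_pi hφ0.le (by linarith [pi_pos])) _
  have hball : volume (closedBall (0 : V) R) ≤
      ENNReal.ofReal (U.card * sin φ ^ (finrank ℝ V - 2)) * volume (closedBall (0 : V) R) :=
    calc volume (closedBall (0 : V) R)
        ≤ volume (⋃ u ∈ U, solidSector u R φ) :=
          measure_mono (closedBall_subset_biUnion_solidSector hR hcover)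
      _ ≤ ∑ u ∈ U, volume (solidSector u R φ) := measure_biUnion_finset_le _ _
      _ ≤ ∑ _u ∈ U,
            ENNReal.ofReal (sin φ ^ (finrank ℝ V - 2)) * volume (closedBall (0 : V) R) :=
          Finset.sum_le_sum fun u hu ↦ volume_solidSector_le (hU u hu) hV hR.le hφ0 hφ
      _ = _ := by
          rw [Finset.sum_const, nsmul_eq_mul, ← mul_assoc, ENNReal.ofReal_mul (by positivity),
            ENNReal.ofReal_natCast]
  rw [← ENNReal.one_le_ofReal, ← ENNReal.mul_le_mul_iff_left
    (measure_closedBall_pos volume (0 : V) hR).ne' measure_closedBall_lt_top.ne, one_mul]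
  exact hball

/-- Covering the sphere of radius R in ℝᴰ (D ≥ 3) by spherical caps of
half-angle φ ∈ (0, π/2) requires at least (1/sin φ)^(D−2) caps. -/
theorem stmt_13 {D : ℕ} (hD : 3 ≤ D) (R : ℝ) (hR : 0 < R)
    (φ : ℝ) (hφ0 : 0 < φ) (hφ : φ < Real.pi / 2)
    (U : Finset (EuclideanSpace ℝ (Fin D))) (hU : ∀ u ∈ U, ‖u‖ = 1)
    (hcover : ∀ x : EuclideanSpace ℝ (Fin D), ‖x‖ = R →
      ∃ u ∈ U, R * Real.cos φ ≤ inner ℝ x u) :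
    ((Real.sin φ)⁻¹) ^ (D - 2) ≤ (U.card : ℝ) := by
  have h := one_le_card_mul_sin_pow_of_caps_cover_sphere
    (by rw [finrank_euclideanSpace_fin]; omega) hR hφ0 hφ hU hcover
  rw [finrank_euclideanSpace_fin] at h
  have hs : 0 < sin φ := sin_pos_of_pos_of_lt_pi hφ0 (by linarith [pi_pos])
  rwa [inv_pow, inv_le_iff_one_le_mul₀ (by positivity)]
end

section
/- For D ≥ 1 and φ ∈ (0, π/2], the integral ∫₀^φ sin^D(t) dt ≤ [√π · Γ((D+1)/2) / Γ(1+D/2)] · sin^D(φ). -/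
/-!
Let `C = ∫₀^π sin^D`, which the Wallis recursion identifies with the Gamma expression.
If `D cos² φ ≤ 1/2`, Bernoulli's inequality gives `sin^D φ ≥ 1/2`, while the integral is at most
`∫₀^{π/2} sin^D = C / 2`. Otherwise `sin t ≤ tan φ · cos t` on `[0, φ]` bounds the integral by
`tan φ · sin^D φ / D`, and `tan φ / D ≤ C` follows from `C² D ≥ 2`, itself a consequence of
`C_D C_{D+1} = 2π / (D + 1)` and `C_{D+1} ≤ C_D`.
-/

open Real intervalIntegral

theorem integral_sin_pow_add_two_zero_pi (n : ℕ) :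
    ∫ x in 0..π, sin x ^ (n + 2) = (n + 1) / (n + 2) * ∫ x in 0..π, sin x ^ n := by
  simp [integral_sin_pow]

theorem integral_sin_pow_zero_pi_eq_Gamma (n : ℕ) :
    ∫ x in 0..π, sin x ^ n = √π * Gamma ((n + 1) / 2) / Gamma (1 + n / 2) := by
  induction n using Nat.twoStepInduction with
  | zero =>
    have hG : Gamma (1 / 2) = √π := Gamma_one_half_eq
    norm_num at hG ⊢
    rw [hG, mul_self_sqrt pi_pos.le]
  | one =>
    have hG : Gamma (3 / 2) = √π / 2 := by
      rw [show (3 : ℝ) / 2 = 1 / 2 + 1 by norm_num, Gamma_add_one (by norm_num),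
        Gamma_one_half_eq]
      ring
    norm_num [hG, Real.sqrt_ne_zero'.mpr pi_pos]
  | more n ih _ =>
    have hGn : Gamma (1 + n / 2) ≠ 0 := (Gamma_pos_of_pos (by positivity)).ne'
    rw [integral_sin_pow_add_two_zero_pi, ih]
    push_cast
    rw [show ((n : ℝ) + 2 + 1) / 2 = (n + 1) / 2 + 1 by ring, Gamma_add_one (by positivity),
      show 1 + ((n : ℝ) + 2) / 2 = 1 + n / 2 + 1 by ring, Gamma_add_one (by positivity)]
    field_simp
    ring

theorem integral_sin_pow_mul_integral_sin_pow_succ (n : ℕ) :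
    (∫ x in 0..π, sin x ^ n) * (∫ x in 0..π, sin x ^ (n + 1)) = 2 * π / (n + 1) := by
  induction n with
  | zero => norm_num; ring
  | succ n ih =>
    rw [integral_sin_pow_add_two_zero_pi, mul_left_comm, mul_comm _ (∫ x in 0..π, sin x ^ n), ih]
    push_cast
    field_simp
    ring

theorem two_le_sq_integral_sin_pow_mul {n : ℕ} (hn : 1 ≤ n) :
    2 ≤ (∫ x in 0..π, sin x ^ n) ^ 2 * n := by
  have hprod : 2 * π / (n + 1) ≤ (∫ x in 0..π, sin x ^ n) ^ 2 := by
    rw [← integral_sin_pow_mul_integral_sin_pow_succ, sq]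
    exact mul_le_mul_of_nonneg_left (integral_sin_pow_succ_le n) (integral_sin_pow_pos n).le
  have hn' : (1 : ℝ) ≤ n := by exact_mod_cast hn
  calc (2 : ℝ) ≤ 2 * π / (n + 1) * n := by
        rw [div_mul_eq_mul_div, le_div_iff₀ (by positivity)]; nlinarith [pi_gt_three]
    _ ≤ (∫ x in 0..π, sin x ^ n) ^ 2 * n := by gcongr

theorem integral_sin_pow_zero_half_pi (n : ℕ) :
    ∫ x in 0..π / 2, sin x ^ n = (∫ x in 0..π, sin x ^ n) / 2 := by
  have hsymm : ∫ x in π / 2..π, sin x ^ n = ∫ x in 0..π / 2, sin x ^ n := by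
    have := integral_comp_sub_left (fun x => sin x ^ n) π (a := π / 2) (b := π)
    simpa only [sin_pi_sub, sub_self, show π - π / 2 = π / 2 by ring] using this
  have hint : ∀ a b : ℝ, IntervalIntegrable (fun x => sin x ^ n) MeasureTheory.volume a b :=
    fun a b => (continuous_sin.pow n).intervalIntegrable a b
  rw [← integral_add_adjacent_intervals (hint 0 (π / 2)) (hint (π / 2) π), hsymm]
  ring

theorem integral_sin_pow_le_half {φ : ℝ} (n : ℕ) (hφ0 : 0 ≤ φ) (hφ : φ ≤ π / 2) :
    ∫ x in 0..φ, sin x ^ n ≤ (∫ x in 0..π, sin x ^ n) / 2 := by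
  rw [← integral_sin_pow_zero_half_pi]
  refine integral_mono_interval le_rfl hφ0 hφ ?_ ((continuous_sin.pow n).intervalIntegrable _ _)
  filter_upwards [MeasureTheory.ae_restrict_mem measurableSet_Ioc] with x hx
  exact pow_nonneg (sin_nonneg_of_nonneg_of_le_pi hx.1.le (by linarith [hx.2, pi_pos])) n

theorem mul_cos_mul_integral_sin_pow_le {φ : ℝ} (n : ℕ) (hφ0 : 0 ≤ φ) (hφ : φ ≤ π) :
    (n + 1) * cos φ * ∫ x in 0..φ, sin x ^ (n + 1) ≤ sin φ ^ (n + 2) := by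
  have hpoint : ∀ x ∈ Set.Icc 0 φ, cos φ * sin x ^ (n + 1) ≤ sin φ * (sin x ^ n * cos x) := by
    rintro x ⟨hx0, hxφ⟩
    have hsub : sin x * cos φ - cos x * sin φ ≤ 0 := by
      rw [← sin_sub]; exact sin_nonpos_of_nonpos_of_neg_pi_le (by linarith) (by linarith)
    have hsx : 0 ≤ sin x ^ n := pow_nonneg (sin_nonneg_of_nonneg_of_le_pi hx0 (by linarith)) n
    calc cos φ * sin x ^ (n + 1) = sin x ^ n * (sin x * cos φ) := by ring
      _ ≤ sin x ^ n * (cos x * sin φ) := mul_le_mul_of_nonneg_left (by linarith) hsx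
      _ = sin φ * (sin x ^ n * cos x) := by ring
  have hmono : ∫ x in 0..φ, cos φ * sin x ^ (n + 1) ≤ ∫ x in 0..φ, sin φ * (sin x ^ n * cos x) :=
    integral_mono_on hφ0 (Continuous.intervalIntegrable (by fun_prop) _ _)
      (Continuous.intervalIntegrable (by fun_prop) _ _) hpoint
  have hprim : ∫ x in 0..φ, sin x ^ n * cos x = sin φ ^ (n + 1) / (n + 1) := by
    simpa using integral_sin_pow_mul_cos_pow_odd n 0 (a := 0) (b := φ)
  rw [integral_const_mul, integral_const_mul, hprim] at hmono
  calc (n + 1) * cos φ * ∫ x in 0..φ, sin x ^ (n + 1)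
      ≤ (n + 1) * (sin φ * (sin φ ^ (n + 1) / (n + 1))) := by
        rw [mul_assoc]; gcongr
    _ = sin φ ^ (n + 2) := by field_simp; ring

theorem one_sub_mul_cos_sq_le_sin_pow {x : ℝ} (n : ℕ) (hx : 0 ≤ sin x) :
    1 - n * cos x ^ 2 ≤ sin x ^ n :=
  calc 1 - n * cos x ^ 2 = 1 + n * (-cos x ^ 2) := by ring
    _ ≤ (1 + -cos x ^ 2) ^ n := one_add_mul_le_pow (by nlinarith [cos_sq_le_one x]) n
    _ = (sin x ^ n) ^ 2 := by rw [← sub_eq_add_neg, ← sin_sq, ← pow_mul, ← pow_mul, mul_comm]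
    _ ≤ sin x ^ n := by
        rw [sq]; exact mul_le_of_le_one_left (pow_nonneg hx n) (pow_le_one₀ hx (sin_le_one x))

theorem stmt_14_general {D : ℕ} (φ : ℝ) (hφ0 : 0 < φ) (hφ : φ ≤ Real.pi / 2) :
    ∫ t in (0 : ℝ)..φ, (Real.sin t) ^ D ≤
      Real.sqrt Real.pi * Real.Gamma (((D : ℝ) + 1) / 2) /
        Real.Gamma (1 + (D : ℝ) / 2) * (Real.sin φ) ^ D := by
  rw [← integral_sin_pow_zero_pi_eq_Gamma]
  have hsin : 0 ≤ sin φ := sin_nonneg_of_nonneg_of_le_pi hφ0.le (by linarith [pi_pos])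
  have hC : 0 < ∫ x in 0..π, sin x ^ D := integral_sin_pow_pos D
  by_cases hcos : D * cos φ ^ 2 ≤ 1 / 2
  · calc ∫ x in 0..φ, sin x ^ D ≤ (∫ x in 0..π, sin x ^ D) / 2 :=
          integral_sin_pow_le_half D hφ0.le hφ
      _ ≤ (∫ x in 0..π, sin x ^ D) * sin φ ^ D := by
          nlinarith [one_sub_mul_cos_sq_le_sin_pow D hsin]
  obtain ⟨n, rfl⟩ : ∃ n, D = n + 1 :=
    Nat.exists_eq_succ_of_ne_zero (by rintro rfl; norm_num at hcos)
  set C := ∫ x in 0..π, sin x ^ (n + 1)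
  push_cast at hcos ⊢
  have hcos0 : 0 ≤ cos φ := cos_nonneg_of_mem_Icc ⟨by linarith [pi_pos], hφ⟩
  -- `(C (n+1) cos φ)² = C² (n+1) · (n+1) cos² φ > 2 · 1/2`
  have hkey : 1 ≤ C * (n + 1) * cos φ := by
    have hC2 : 2 ≤ C ^ 2 * (n + 1) := by exact_mod_cast two_le_sq_integral_sin_pow_mul n.succ_pos
    nlinarith [mul_nonneg hC.le hcos0]
  have hI : 0 ≤ ∫ x in 0..φ, sin x ^ (n + 1) :=
    integral_nonneg hφ0.le fun x hx =>
      pow_nonneg (sin_nonneg_of_nonneg_of_le_pi hx.1 (by linarith [hx.2, pi_pos])) _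
  calc ∫ x in 0..φ, sin x ^ (n + 1) ≤ C * (n + 1) * cos φ * ∫ x in 0..φ, sin x ^ (n + 1) :=
        le_mul_of_one_le_left hI hkey
    _ = C * ((n + 1) * cos φ * ∫ x in 0..φ, sin x ^ (n + 1)) := by ring
    _ ≤ C * sin φ ^ (n + 2) := by
        gcongr; exact mul_cos_mul_integral_sin_pow_le n hφ0.le (by linarith [pi_pos])
    _ ≤ C * sin φ ^ (n + 1) :=
        mul_le_mul_of_nonneg_left
          (pow_le_pow_of_le_one hsin (sin_le_one φ) (Nat.le_succ _)) hC.le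

/-- Bound on the integral of sin^D over [0, φ]. -/
theorem stmt_14 {D : ℕ} (hD : 1 ≤ D) (φ : ℝ) (hφ0 : 0 < φ) (hφ : φ ≤ Real.pi / 2) :
    ∫ t in (0 : ℝ)..φ, (Real.sin t) ^ D ≤
      Real.sqrt Real.pi * Real.Gamma (((D : ℝ) + 1) / 2) /
        Real.Gamma (1 + (D : ℝ) / 2) * (Real.sin φ) ^ D :=
  stmt_14_general φ hφ0 hφ
end
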